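/- Let n be a finite type and let L : ℝ → Matrix n n ℂ be continuous with pairwise commuting values: L(s) * L(t) = L(t) * L(s) for all s, t. Define Φ(t) = exp(∫₀ᵗ L(τ) dτ) using the matrix exponential. Then for every t, Φ has derivative Φ'(t) = L(t) * Φ(t), and moreover L(t) * Φ(t) = Φ(t) * L(t); in particular Φ simultaneously solves the left master equation Φ' = L Φ and the right master equation Φ' = Φ L (the left and right generators coincide). -/

import Mathlib

attribute [local instance] Matrix.linftyOpNormedAddCommGroup Matrix.linftyOpNormedRing
  Matrix.linftyOpNormedAlgebra

open intervalIntegral in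
/-- For a continuous family `L` with pairwise commuting values, the map
`Φ(t) = exp(∫₀ᵗ L(τ) dτ)` solves both the left master equation `Φ' = L Φ` and the
right master equation `Φ' = Φ L`: the left and right generators coincide. -/
theorem stmt_9 (n : Type*) [Fintype n] [DecidableEq n]
    (L : ℝ → Matrix n n ℂ) (hLcont : Continuous L)
    (hcomm : ∀ s t : ℝ, L s * L t = L t * L s)
    (Φ : ℝ → Matrix n n ℂ)
    (hΦ : ∀ t : ℝ, Φ t = NormedSpace.exp (∫ τ in (0:ℝ)..t, L τ)) :
    ∀ t : ℝ, HasDerivAt Φ (L t * Φ t) t ∧ L t * Φ t = Φ t * L t := by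
  set A : ℝ → Matrix n n ℂ := fun t => ∫ τ in (0:ℝ)..t, L τ with hAdef
  replace hLcont : @Continuous ℝ (Matrix n n ℂ) _ PseudoMetricSpace.toUniformSpace.toTopologicalSpace L := hLcont
  have hInt : ∀ a b : ℝ, @IntervalIntegrable (Matrix n n ℂ) PseudoMetricSpace.toUniformSpace.toTopologicalSpace _ L MeasureTheory.volume a b := fun a b =>
    hLcont.intervalIntegrable a b
  have hA : ∀ t : ℝ, HasDerivAt A (L t) t := fun t =>
    intervalIntegral.integral_hasDerivAt_right (hInt 0 t)
      (hLcont.stronglyMeasurableAtFilter _ _) hLcont.continuousAt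
  -- L s commutes with A t
  have hLA : ∀ s t : ℝ, Commute (L s) (A t) := by
    intro s t
    have hl := (ContinuousLinearMap.mul ℂ (Matrix n n ℂ) (L s)).intervalIntegral_comp_comm (hInt 0 t)
    have hr := ((ContinuousLinearMap.mul ℂ (Matrix n n ℂ)).flip (L s)).intervalIntegral_comp_comm (hInt 0 t)
    simp only [ContinuousLinearMap.mul_apply', ContinuousLinearMap.flip_apply] at hl hr
    show L s * A t = A t * L s
    simp only [hAdef]
    rw [← hl, ← hr]
    exact intervalIntegral.integral_congr fun τ _ => hcomm s τ
  -- A s commutes with A t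
  have hAA : ∀ s t : ℝ, Commute (A s) (A t) := by
    intro s t
    have hl := (ContinuousLinearMap.mul ℂ (Matrix n n ℂ) (A t)).intervalIntegral_comp_comm (hInt 0 s)
    have hr := ((ContinuousLinearMap.mul ℂ (Matrix n n ℂ)).flip (A t)).intervalIntegral_comp_comm (hInt 0 s)
    simp only [ContinuousLinearMap.mul_apply', ContinuousLinearMap.flip_apply] at hl hr
    show (∫ τ in (0:ℝ)..s, L τ) * A t = A t * ∫ τ in (0:ℝ)..s, L τ
    rw [← hr, ← hl]
    exact intervalIntegral.integral_congr fun τ _ => (hLA τ t).eq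
  intro t
  have hcommΦ : L t * Φ t = Φ t * L t := by
    rw [hΦ t]
    exact ((hLA t t).exp_right).eq
  refine ⟨?_, hcommΦ⟩
  -- Φ u = exp (A u - A t) * Φ t
  have hsplit : ∀ u : ℝ, Φ u = NormedSpace.exp (A u - A t) * Φ t := by
    intro u
    rw [hΦ u, hΦ t]
    show NormedSpace.exp (A u) = NormedSpace.exp (A u - A t) * NormedSpace.exp (A t)
    have h := NormedSpace.exp_add_of_commute (((hAA u t).sub_left (Commute.refl (A t))))
    rw [sub_add_cancel] at h
    exact h
  have hg : HasDerivAt (fun u => NormedSpace.exp (A u - A t)) (L t) t := by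
    have h0 : HasDerivAt (fun u => A u - A t) (L t) t := (hA t).sub_const (A t)
    have hexp : HasFDerivAt (NormedSpace.exp)
        (1 : Matrix n n ℂ →L[ℂ] Matrix n n ℂ) (A t - A t) := by
      rw [sub_self]
      exact hasFDerivAt_exp_zero (𝕂 := ℂ) (𝔸 := Matrix n n ℂ)
    exact (hexp.restrictScalars ℝ).comp_hasDerivAt t h0
  have := hg.mul_const (Φ t)
  have heq : (fun u => NormedSpace.exp (A u - A t) * Φ t) = Φ :=
    funext fun u => (hsplit u).symm
  rw [heq] at this
  exact this
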